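/- Let ω be a majorant, M > 0, and let G be a proper subdomain of the plane. Let f be a real harmonic function in G that extends continuously to ∂G and suppose | |f(z)| − |f(w)| | ≤ M ω(|z−w|) for all z, w ∈ G ∪ ∂G. Then the gradient of f satisfies |∇f(z)| ≤ (40 M / π) · ω(d_G(z)) / d_G(z) for every z ∈ G. -/

import Mathlib

open MeasureTheory Metric Set Real
open scoped ENNReal

/-- A real-valued function on `ℂ ≅ ℝ²` is harmonic on a set: it is `C²` there and
its Laplacian `u_xx + u_yy` vanishes. -/
def IsHarmonicOnR (u : ℂ → ℝ) (s : Set ℂ) : Prop :=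
  ContDiffOn ℝ 2 u s ∧ ∀ z ∈ s,
    fderiv ℝ (fun w => fderiv ℝ u w 1) z 1
      + fderiv ℝ (fun w => fderiv ℝ u w Complex.I) z Complex.I = 0

/-- `|∇u(z)|`: the Euclidean norm of the gradient `(u_x, u_y)` of a real-valued
function `u` on `ℂ ≅ ℝ²`. -/
noncomputable def gradNorm (u : ℂ → ℝ) (z : ℂ) : ℝ :=
  Real.sqrt ((fderiv ℝ u z 1) ^ 2 + (fderiv ℝ u z Complex.I) ^ 2)

/-- A majorant: a continuous increasing function `ω : [0,∞) → [0,∞)` with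
`ω 0 = 0` such that `ω t / t` is non-increasing for `t > 0`. -/
def IsMajorant (ω : ℝ → ℝ) : Prop :=
  ContinuousOn ω (Ici 0) ∧ MonotoneOn ω (Ici 0) ∧ ω 0 = 0 ∧
    ∀ s t : ℝ, 0 < s → s ≤ t → ω t / t ≤ ω s / s

/-!
Fix `z ∈ G`, let `d = d_G(z)` and work on the closed disc of radius `d / 2` about `z`, where any
two points are at distance at most `d`, so that `| |f x| - |f y| | ≤ M ω(d)` there. Being continuous
on a connected set, `f` either vanishes somewhere on the disc, and then `|f| ≤ M ω(d)`, or has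
constant sign, and then `|f - f(z)| ≤ M ω(d)`. Either way `|f - c| ≤ M ω(d)` on the disc for a
constant `c`. Differentiating the Herglotz–Riesz representation of the harmonic function `f - c` at
the centre gives `|∇f(z)| ≤ 2 M ω(d) / (d / 2)`, and `4 ≤ 40 / π`.
-/

open InnerProductSpace Topology Laplacian

theorem IsMajorant.nonneg {ω : ℝ → ℝ} (hω : IsMajorant ω) {t : ℝ} (ht : 0 ≤ t) : 0 ≤ ω t :=
  hω.2.2.1 ▸ hω.2.1 self_mem_Ici ht ht

theorem IsOpen.infDist_frontier_eq_infDist_compl {E : Type*} [NormedAddCommGroup E]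
    [NormedSpace ℝ E] [FiniteDimensional ℝ E] {G : Set E} {x : E} (hG : IsOpen G) (hx : x ∈ G)
    (hGne : G ≠ univ) : infDist x (frontier G) = infDist x Gᶜ := by
  obtain ⟨y, hy, hyd⟩ := exists_mem_frontier_infDist_compl_eq_dist hx hGne
  refine le_antisymm (hyd ▸ infDist_le_dist_of_mem hy) (infDist_le_infDist_of_subset ?_ ⟨y, hy⟩)
  exact fun w hw => (hG.frontier_eq ▸ hw).2

theorem IsPreconnected.exists_forall_abs_sub_le_of_abs_abs_sub_le {X : Type*}
    [TopologicalSpace X] {S : Set X} {f : X → ℝ} {B : ℝ} (hS : IsPreconnected S)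
    (hf : ContinuousOn f S) (hB : ∀ x ∈ S, ∀ y ∈ S, |(|f x| - |f y|)| ≤ B) :
    ∃ c, ∀ x ∈ S, |f x - c| ≤ B := by
  by_cases hzero : ∃ y ∈ S, f y = 0
  · obtain ⟨y, hy, hfy⟩ := hzero
    exact ⟨0, fun x hx => by simpa [hfy] using hB x hx y hy⟩
  push Not at hzero
  rcases S.eq_empty_or_nonempty with rfl | ⟨y, hy⟩
  · exact ⟨0, by simp⟩
  refine ⟨f y, fun x hx => ?_⟩
  rcases hS.eq_or_eq_neg_of_sq_eq hf hf.abs (fun x _ => by simp [sq_abs])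
    (fun hx => abs_ne_zero.2 (hzero _ hx)) with h | h
  · rw [h hx, h hy]
    exact hB x hx y hy
  · rw [h hx, h hy, Pi.neg_apply, Pi.neg_apply, neg_sub_neg, abs_sub_comm]
    exact hB x hx y hy

theorem Real.norm_circleAverage_le {E : Type*} [NormedAddCommGroup E] [NormedSpace ℝ E]
    {f : ℂ → E} {c : ℂ} {R C : ℝ} (hf : ∀ ζ ∈ sphere c |R|, ‖f ζ‖ ≤ C) :
    ‖circleAverage f c R‖ ≤ C := by
  have h2π : 0 < 2 * π := by positivity
  have hint := intervalIntegral.norm_integral_le_of_norm_le_const (a := 0) (b := 2 * π)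
    (f := fun θ => f (circleMap c R θ)) (C := C) fun θ _ => hf _ (circleMap_mem_sphere' c R θ)
  rw [sub_zero, abs_of_pos h2π] at hint
  rw [circleAverage_def, norm_smul, norm_inv, Real.norm_of_nonneg h2π.le]
  calc (2 * π)⁻¹ * ‖∫ θ in 0..2 * π, f (circleMap c R θ)‖ ≤ (2 * π)⁻¹ * (C * (2 * π)) := by
        gcongr
    _ = C := by field_simp

theorem InnerProductSpace.HarmonicAt.comp_add_right {E F : Type*} [NormedAddCommGroup E]
    [InnerProductSpace ℝ E] [FiniteDimensional ℝ E] [NormedAddCommGroup F] [NormedSpace ℝ F]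
    {f : E → F} {x a : E} (h : HarmonicAt f (x + a)) : HarmonicAt (fun y => f (y + a)) x := by
  have hΔ : Δ (fun y => f (y + a)) = fun y => Δ f (y + a) := by
    ext y
    simp [laplacian_eq_iteratedFDeriv_stdOrthonormalBasis, iteratedFDeriv_comp_add_right]
  refine ⟨h.1.comp x (contDiffAt_id.add contDiffAt_const), ?_⟩
  rw [hΔ]
  exact ((continuous_add_const a).tendsto x).eventually h.2

theorem IsHarmonicOnR.harmonicOnNhd {u : ℂ → ℝ} {s : Set ℂ} (hs : IsOpen s)
    (hu : IsHarmonicOnR u s) : HarmonicOnNhd u s := by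
  intro x hx
  refine ⟨hu.1.contDiffAt (hs.mem_nhds hx), ?_⟩
  filter_upwards [hs.mem_nhds hx] with y hy
  have hdiff : DifferentiableAt ℝ (fderiv ℝ u) y :=
    ((hu.1.contDiffAt (hs.mem_nhds hy)).fderiv_right (m := 1) (by norm_num)).differentiableAt
      (by norm_num)
  have hΔ := hu.2 y hy
  rw [fderiv_clm_apply hdiff (differentiableAt_const _),
    fderiv_clm_apply hdiff (differentiableAt_const _)] at hΔ
  simpa [laplacian_eq_iteratedFDeriv_complexPlane, iteratedFDeriv_two_apply] using hΔ

theorem gradNorm_comp_add_right_sub_const (u : ℂ → ℝ) (z a : ℂ) (c : ℝ) :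
    gradNorm (fun w => u (w + a) - c) z = gradNorm u (z + a) := by
  simp only [gradNorm, fderiv_sub_const, fderiv_comp_add_right]

theorem gradNorm_eq_norm_deriv {u : ℂ → ℝ} {F : ℂ → ℂ} {z : ℂ} (hF : DifferentiableAt ℂ F z)
    (hu : u =ᶠ[𝓝 z] fun w => (F w).re) : gradNorm u z = ‖deriv F z‖ := by
  have h : HasFDerivAt u (Complex.reCLM.comp ((fderiv ℂ F z).restrictScalars ℝ)) z :=
    (Complex.reCLM.hasFDerivAt.comp z (hF.hasFDerivAt.restrictScalars ℝ)).congr_of_eventuallyEq hu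
  rw [gradNorm, h.fderiv, Complex.norm_def, Complex.normSq_apply]
  congr 1
  simp only [ContinuousLinearMap.comp_apply, ContinuousLinearMap.coe_restrictScalars',
    fderiv_eq_smul_deriv, smul_eq_mul, one_mul, Complex.reCLM_apply, Complex.mul_re,
    Complex.I_re, Complex.I_im, zero_mul, zero_sub, even_two, Even.neg_pow]
  ring

theorem gradNorm_zero_le_of_harmonicOnNhd_closedBall {u : ℂ → ℝ} {R K : ℝ} (hR : 0 < R)
    (hu : HarmonicOnNhd u (closedBall 0 R)) (hK : ∀ ζ ∈ sphere 0 R, |u ζ| ≤ K) :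
    gradNorm u 0 ≤ 2 * K / R := by
  have hcont : ContinuousOn u (sphere 0 R) := hu.continuousOn.mono sphere_subset_closedBall
  have hint : CircleIntegrable u 0 R := hcont.circleIntegrable hR.le
  have hint' : CircleIntegrable (fun ζ => (u ζ : ℂ)) 0 R :=
    (Complex.continuous_ofReal.comp_continuousOn hcont).circleIntegrable hR.le
  have hH := hasDerivAt_circleAverage_herglotzRieszKernel_smul hint' (mem_ball_self hR)
  have hre : u =ᶠ[𝓝 0] fun w =>
      (circleAverage (fun ζ => herglotzRieszKernel 0 w ζ • (u ζ : ℂ)) 0 R).re := by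
    filter_upwards [ball_mem_nhds 0 hR] with w hw
    rw [re_circleAverage_herglotzRieszKernel_smul hint hw,
      hu.circleAverage_re_herglotzRieszKernel_smul hw]
  rw [gradNorm_eq_norm_deriv hH.differentiableAt hre, hH.deriv]
  refine norm_circleAverage_le fun ζ hζ => ?_
  rw [abs_of_pos hR] at hζ
  have hζR : ‖ζ‖ = R := mem_sphere_zero_iff_norm.1 hζ
  simp only [sub_zero, norm_smul, norm_div, norm_mul, norm_pow, hζR, Complex.norm_real,
    Real.norm_eq_abs, RCLike.norm_ofNat]
  calc 2 * R / R ^ 2 * |u ζ| = 2 / R * |u ζ| := by field_simp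
    _ ≤ 2 / R * K := by gcongr; exact hK ζ hζ
    _ = 2 * K / R := by ring

theorem gradNorm_le_of_harmonicOnNhd_closedBall {u : ℂ → ℝ} {c : ℂ} {R K a : ℝ} (hR : 0 < R)
    (hu : HarmonicOnNhd u (closedBall c R)) (hK : ∀ ζ ∈ sphere c R, |u ζ - a| ≤ K) :
    gradNorm u c ≤ 2 * K / R := by
  have hv : HarmonicOnNhd (fun ζ => u (ζ + c) - a) (closedBall 0 R) := fun ζ hζ =>
    (hu (ζ + c) (by simpa using hζ)).comp_add_right.sub (harmonicAt_const a)
  simpa [gradNorm_comp_add_right_sub_const] using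
    gradNorm_zero_le_of_harmonicOnNhd_closedBall hR hv fun ζ hζ => hK _ (by simpa using hζ)

theorem stmt5_general (ω : ℝ → ℝ) (hω : IsMajorant ω) (M : ℝ) (hM : 0 < M)
    (G : Set ℂ) (hGopen : IsOpen G) (hGproper : G ≠ univ)
    (f : ℂ → ℝ) (hf : IsHarmonicOnR f G)
    (hlip : ∀ z ∈ G ∪ frontier G, ∀ w ∈ G ∪ frontier G,
      abs (|f z| - |f w|) ≤ M * ω (dist z w)) :
    ∀ z ∈ G, gradNorm f z ≤
      (40 * M / Real.pi) * (ω (infDist z (frontier G)) / infDist z (frontier G)) := by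
  intro z hz
  rw [hGopen.infDist_frontier_eq_infDist_compl hz hGproper]
  set d := infDist z Gᶜ
  have hd : 0 < d :=
    (hGopen.isClosed_compl.notMem_iff_infDist_pos (nonempty_compl.2 hGproper)).1 (not_not.2 hz)
  have hball : closedBall z (d / 2) ⊆ G :=
    (closedBall_subset_ball (by linarith)).trans ball_infDist_compl_subset
  have hharm := (hf.harmonicOnNhd hGopen).mono hball
  have hosc : ∀ x ∈ closedBall z (d / 2), ∀ y ∈ closedBall z (d / 2),
      |(|f x| - |f y|)| ≤ M * ω d := by
    intro x hx y hy
    have hxy : dist x y ≤ d := by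
      linarith [dist_triangle x z y, mem_closedBall.1 hx, mem_closedBall'.1 hy]
    calc |(|f x| - |f y|)| ≤ M * ω (dist x y) := hlip x (.inl (hball hx)) y (.inl (hball hy))
      _ ≤ M * ω d := by gcongr; exact hω.2.1 dist_nonneg hd.le hxy
  obtain ⟨c, hc⟩ := (convex_closedBall z (d / 2)).isPreconnected
    |>.exists_forall_abs_sub_le_of_abs_abs_sub_le hharm.continuousOn hosc
  have hgrad := gradNorm_le_of_harmonicOnNhd_closedBall (half_pos hd) hharm
    fun ζ hζ => hc ζ (sphere_subset_closedBall hζ)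
  have hπ : 4 ≤ 40 / π := by rw [le_div_iff₀ pi_pos]; linarith [pi_le_four]
  have hbound : 0 ≤ M * (ω d / d) := by have := hω.nonneg hd.le; positivity
  calc gradNorm f z ≤ 2 * (M * ω d) / (d / 2) := hgrad
    _ = 4 * (M * (ω d / d)) := by field_simp; ring
    _ ≤ 40 / π * (M * (ω d / d)) := by gcongr
    _ = 40 * M / π * (ω d / d) := by ring

/-- let `ω` be a majorant, `M > 0`, `G` a proper subdomain of the
plane, and `f` a real harmonic function in `G`, continuous up to `∂G`, with
`| |f(z)| - |f(w)| | ≤ M ω(|z-w|)` for all `z, w ∈ G ∪ ∂G`. Then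
`|∇f(z)| ≤ (40M/π) ω(d_G(z))/d_G(z)` for every `z ∈ G`. -/
theorem stmt5 (ω : ℝ → ℝ) (hω : IsMajorant ω) (M : ℝ) (hM : 0 < M)
    (G : Set ℂ) (hGopen : IsOpen G) (hGconn : IsConnected G) (hGproper : G ≠ univ)
    (f : ℂ → ℝ) (hf : IsHarmonicOnR f G) (hfc : ContinuousOn f (closure G))
    (hlip : ∀ z ∈ G ∪ frontier G, ∀ w ∈ G ∪ frontier G,
      abs (|f z| - |f w|) ≤ M * ω (dist z w)) :
    ∀ z ∈ G, gradNorm f z ≤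
      (40 * M / Real.pi) * (ω (infDist z (frontier G)) / infDist z (frontier G)) :=
  stmt5_general ω hω M hM G hGopen hGproper f hf hlip
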